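/- arXiv:1004.5344 — 3 statements merged into one kernel-verified Lean document; each statement's English description precedes it below -/
import Mathlib

section
/- The only monic reciprocal integer polynomials of degree 4 possessing a Perron root strictly less than the Perron root of x^4 - 2x^3 - 2x + 1 are: x^4 - x^3 - x^2 - x + 1, x^4 - 2x^3 + x^2 - 2x + 1, x^4 - x^3 - 2x^2 - x + 1, and x^4 - 3x^3 + 3x^2 - 3x + 1. -/
/-!
With `y = x + x⁻¹` the quartic is `x² Q(y)` for `Q(y) = y² + αy + β - 2`, so its roots are the
pairs `x, x⁻¹` over the two roots `y₁, y₂` of `Q`. A Perron root `l` has trace `y₁ = l + l⁻¹ > 2`,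
and as `x ↦ x + x⁻¹` increases on `[1, ∞)`, dominance of `l` forces `-y₁ < y₂ ≤ y₁`, while `l < ρ`
means `y₁ < c`, the trace `1 + √3` of `ρ`. Then `-α = y₁ + y₂ ∈ {1, …, 5}`, and for each value
`β - 2 = y₁ y₂` is pinned between `c(-α) - c²` and `α² / 4`, which leaves the four listed pairs.
Conversely, for these pairs `Q` has one root in `(2, c)` and the other in `(-2, 2)`, whose
`x`-roots lie on the unit circle.
-/

open Polynomial

/-- The monic reciprocal quartic `x^4 + α x^3 + β x^2 + α x + 1`. -/
noncomputable def quartic (α β : ℤ) : Polynomial ℤ :=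
  X ^ 4 + C α * X ^ 3 + C β * X ^ 2 + C α * X + 1

/-- `l` is a Perron root of `P`: a real root `l > 1` strictly dominating all other
complex roots in absolute value. -/
def IsPerronRootOf (l : ℝ) (P : Polynomial ℤ) : Prop :=
  1 < l ∧ Polynomial.aeval l P = 0 ∧
    ∀ z : ℂ, Polynomial.aeval z P = 0 → z ≠ (l : ℂ) → ‖z‖ < l

def traceQuadratic {R : Type*} [CommRing R] (α β : ℤ) (y : R) : R :=
  y ^ 2 + α * y + (β - 2)

section Algebra

variable {α β : ℤ}

lemma aeval_quartic {R : Type*} [CommRing R] (x : R) :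
    aeval x (quartic α β) = x ^ 4 + α * x ^ 3 + β * x ^ 2 + α * x + 1 := by
  simp [quartic]

lemma aeval_quartic_eq_sq_mul_traceQuadratic {K : Type*} [Field K] {x : K} (hx : x ≠ 0) :
    aeval x (quartic α β) = x ^ 2 * traceQuadratic α β (x + x⁻¹) := by
  rw [aeval_quartic, traceQuadratic]
  field_simp
  ring

lemma aeval_quartic_eq_zero {K : Type*} [Field K] {x : K} (hx : x ≠ 0)
    (h : traceQuadratic α β (x + x⁻¹) = 0) : aeval x (quartic α β) = 0 := by
  rw [aeval_quartic_eq_sq_mul_traceQuadratic hx, h, mul_zero]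

lemma traceQuadratic_neg_sub {R : Type*} [CommRing R] (y : R) :
    traceQuadratic α β (-α - y) = traceQuadratic α β y := by
  unfold traceQuadratic
  ring

lemma traceQuadratic_eq_mul {R : Type*} [CommRing R] {y : R} (hy : traceQuadratic α β y = 0)
    (w : R) : traceQuadratic α β w = (w - y) * (w - (-α - y)) := by
  unfold traceQuadratic at *
  linear_combination hy

lemma eq_or_eq_inv_of_add_inv_eq {K : Type*} [Field K] {z l : K} (hz : z ≠ 0) (hl : l ≠ 0)
    (h : z + z⁻¹ = l + l⁻¹) : z = l ∨ z = l⁻¹ := by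
  have : (z - l) * (z - l⁻¹) = 0 := by
    rw [show (z - l) * (z - l⁻¹) = z * (z + z⁻¹ - (l + l⁻¹)) by field_simp; ring, h, sub_self,
      mul_zero]
  rcases mul_eq_zero.1 this with h | h
  · exact Or.inl (sub_eq_zero.1 h)
  · exact Or.inr (sub_eq_zero.1 h)

end Algebra

lemma strictMonoOn_add_inv : StrictMonoOn (fun x : ℝ => x + x⁻¹) (Set.Ici 1) := by
  intro x hx y hy hxy
  simp only [Set.mem_Ici] at hx hy
  have hx0 : 0 < x := by linarith
  have hy0 : 0 < y := by linarith
  have : x⁻¹ - y⁻¹ = (y - x) / (x * y) := by field_simp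
  have : (y - x) / (x * y) < y - x := by
    have hxy1 : 1 < x * y := by nlinarith
    rw [div_lt_iff₀ (by positivity)]
    nlinarith
  show x + x⁻¹ < y + y⁻¹
  linarith

lemma two_lt_add_inv {x : ℝ} (hx : 1 < x) : 2 < x + x⁻¹ := by
  simpa [one_add_one_eq_two] using strictMonoOn_add_inv (le_refl (1 : ℝ)) (Set.mem_Ici.2 hx.le) hx

lemma exists_quadratic_root_gt {b c t : ℝ} (h : t ^ 2 + b * t + c < 0) :
    ∃ y, y ^ 2 + b * y + c = 0 ∧ t < y ∧ -b - y < t := by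
  have hdisc : 0 ≤ b ^ 2 - 4 * c := by nlinarith [sq_nonneg (2 * t + b)]
  set d := Real.sqrt (b ^ 2 - 4 * c)
  have hd : d ^ 2 = b ^ 2 - 4 * c := Real.sq_sqrt hdisc
  have hd0 : 0 ≤ d := Real.sqrt_nonneg _
  refine ⟨(-b + d) / 2, by linear_combination hd / 4, ?_⟩
  have : (t - (-b + d) / 2) * (t - (-b - d) / 2) < 0 := by nlinarith
  constructor <;> nlinarith

lemma exists_add_inv_eq {y : ℝ} (hy : 2 < y) : ∃ μ, 1 < μ ∧ μ + μ⁻¹ = y := by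
  obtain ⟨μ, hμ, hμ1, -⟩ := exists_quadratic_root_gt (b := -y) (c := 1) (t := 1) (by linarith)
  refine ⟨μ, hμ1, ?_⟩
  field_simp
  linear_combination hμ

lemma Complex.norm_eq_one_of_add_inv_eq {z : ℂ} {t : ℝ} (hz : z ≠ 0) (ht : |t| < 2)
    (h : z + z⁻¹ = t) : ‖z‖ = 1 := by
  have hq : z ^ 2 - t * z + 1 = 0 := by
    field_simp at h
    linear_combination h
  have hre := congrArg Complex.re hq
  have him := congrArg Complex.im hq
  simp only [pow_two, add_re, sub_re, mul_re, ofReal_re, ofReal_im, zero_mul, sub_zero, one_re,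
    zero_re, add_im, sub_im, mul_im, add_zero, one_im, zero_im] at hre him
  obtain ⟨ht1, ht2⟩ := abs_lt.1 ht
  have hre' : z.re = t / 2 := by
    rcases mul_eq_zero.1 (show z.im * (2 * z.re - t) = 0 by linear_combination him) with h0 | h0
    · rw [h0] at hre
      nlinarith [sq_nonneg (2 * z.re - t)]
    · linarith
  have : ‖z‖ ^ 2 = 1 := by
    rw [Complex.sq_norm, Complex.normSq_apply]
    nlinarith
  nlinarith [norm_nonneg z]

namespace IsPerronRootOf

variable {l : ℝ}

lemma abs_lt {P : Polynomial ℤ} (hl : IsPerronRootOf l P) {μ : ℝ} (hμ : aeval μ P = 0)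
    (hne : μ ≠ l) : |μ| < l := by
  have hμC : aeval (μ : ℂ) P = 0 := by
    rw [← Complex.coe_algebraMap, aeval_algebraMap_apply, hμ, map_zero]
  simpa using hl.2.2 μ hμC (by exact_mod_cast hne)

lemma traceQuadratic_eq_zero {α β : ℤ} (hl : IsPerronRootOf l (quartic α β)) :
    traceQuadratic α β (l + l⁻¹) = 0 := by
  have hl0 : l ≠ 0 := by linarith [hl.1]
  have := hl.2.1
  rw [aeval_quartic_eq_sq_mul_traceQuadratic hl0] at this
  exact (mul_eq_zero.1 this).resolve_left (pow_ne_zero 2 hl0)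

lemma neg_sub_trace_mem_Ioc {α β : ℤ} (hl : IsPerronRootOf l (quartic α β)) :
    -α - (l + l⁻¹) ∈ Set.Ioc (-(l + l⁻¹)) (l + l⁻¹) := by
  have hl1 : 1 < l := hl.1
  have hy2 : 2 < l + l⁻¹ := two_lt_add_inv hl1
  have hconj : traceQuadratic α β (-α - (l + l⁻¹)) = 0 := by
    rw [traceQuadratic_neg_sub]; exact hl.traceQuadratic_eq_zero
  have hmono {μ : ℝ} (hμ : 1 < μ) (hμl : μ < l) : μ + μ⁻¹ < l + l⁻¹ :=
    strictMonoOn_add_inv (Set.mem_Ici.2 hμ.le) (Set.mem_Ici.2 hl1.le) hμl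
  constructor
  · by_contra! h
    obtain ⟨μ, hμ1, hμ⟩ := exists_add_inv_eq (y := -(-α - (l + l⁻¹))) (by linarith)
    have hroot : aeval (-μ) (quartic α β) = 0 :=
      aeval_quartic_eq_zero (by linarith) (by rw [← neg_inv, ← neg_add, hμ, neg_neg, hconj])
    have := hl.abs_lt hroot (by linarith)
    rw [abs_neg, abs_of_pos (by linarith)] at this
    linarith [hmono hμ1 this]
  · by_contra! h
    obtain ⟨μ, hμ1, hμ⟩ := exists_add_inv_eq (y := -α - (l + l⁻¹)) (by linarith)
    have hroot : aeval μ (quartic α β) = 0 :=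
      aeval_quartic_eq_zero (by linarith) (by rw [hμ, hconj])
    have hne : μ ≠ l := by rintro rfl; linarith
    have := hl.abs_lt hroot hne
    rw [abs_of_pos (by linarith)] at this
    linarith [hmono hμ1 this]

end IsPerronRootOf

lemma exists_isPerronRootOf_quartic {α β : ℤ} {c : ℝ} (h2 : traceQuadratic α β (2 : ℝ) < 0)
    (hneg2 : 0 < traceQuadratic α β (-2 : ℝ)) (hc2 : 2 < c) (hc : 0 < traceQuadratic α β c) :
    ∃ l, IsPerronRootOf l (quartic α β) ∧ l + l⁻¹ < c := by
  obtain ⟨y, hy, h2y, hy2⟩ := exists_quadratic_root_gt h2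
  have hfac := traceQuadratic_eq_mul (α := α) (β := β) hy
  have hy2' : -2 < -α - y := by nlinarith [hfac (-2)]
  have hyc : y < c := by nlinarith [hfac c]
  obtain ⟨l, hl1, rfl⟩ := exists_add_inv_eq h2y
  have hl0 : l ≠ 0 := by positivity
  refine ⟨l, ⟨hl1, aeval_quartic_eq_zero hl0 hy, fun z hz hzl => ?_⟩, hyc⟩
  have hz0 : z ≠ 0 := by rintro rfl; simp [aeval_quartic] at hz
  rw [aeval_quartic_eq_sq_mul_traceQuadratic hz0] at hz
  have hyC : traceQuadratic α β ((l + l⁻¹ : ℝ) : ℂ) = 0 := by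
    simpa [traceQuadratic] using congrArg (algebraMap ℝ ℂ) hy
  rcases mul_eq_zero.1 hz with hz | hz
  · exact absurd hz (pow_ne_zero 2 hz0)
  rw [traceQuadratic_eq_mul hyC] at hz
  rcases mul_eq_zero.1 hz with hz | hz
  · rcases eq_or_eq_inv_of_add_inv_eq hz0 (Complex.ofReal_ne_zero.2 hl0)
      (by push_cast at hz; linear_combination hz) with rfl | rfl
    · exact absurd rfl hzl
    · rw [norm_inv, Complex.norm_real, Real.norm_of_nonneg (by linarith)]
      exact (inv_lt_one_of_one_lt₀ hl1).trans hl1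
  · rw [Complex.norm_eq_one_of_add_inv_eq hz0 (t := -α - (l + l⁻¹)) (abs_lt.2 ⟨hy2', hy2⟩)
      (by push_cast at hz ⊢; linear_combination hz)]
    exact hl1

lemma quartic_coeffs_of_trace_lt {α β : ℤ} {y c : ℝ} (hy : traceQuadratic α β y = 0)
    (h2y : 2 < y) (hyc : y < c) (hc : traceQuadratic (-2) 0 c = 0)
    (hconj : -α - y ∈ Set.Ioc (-y) y) :
    (α, β) = (-1, -1) ∨ (α, β) = (-2, 1) ∨ (α, β) = (-1, -2) ∨ (α, β) = (-3, 3) := by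
  simp only [traceQuadratic] at hy hc
  push_cast at hc
  obtain ⟨hlo, hhi⟩ := hconj
  have hc_lo : 27 / 10 < c := by nlinarith
  have hc_hi : c < 14 / 5 := by nlinarith
  have hα_neg : α < 0 := by exact_mod_cast (show (α : ℝ) < 0 by linarith)
  have hα_gt : -6 < α := by exact_mod_cast (show (-6 : ℝ) < α by linarith)
  have hdisc : 4 * (β - 2) ≤ α * α := by
    exact_mod_cast (show (4 * (β - 2) : ℝ) ≤ α * α by nlinarith [sq_nonneg (2 * y + α)])
  have hsmall : -4 ≤ α → β - 2 < -2 * α - 4 := fun h => by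
    have h' : (-4 : ℝ) ≤ α := by exact_mod_cast h
    exact_mod_cast (show (β - 2 : ℝ) < -2 * α - 4 by
      nlinarith [mul_pos (sub_pos.2 h2y) (show (0 : ℝ) < 2 - (-α - y) by linarith)])
  -- `c` exceeds both traces, so `Q(c) = (c - y) * (c - (-α - y)) > 0`, and `c² = 2c + 2`
  have hc_pos : 0 < (2 + α) * c + β := by
    nlinarith [mul_pos (sub_pos.2 hyc) (show (0 : ℝ) < c - (-α - y) by linarith)]
  have hlarge : α ≤ -2 → 27 * (-2 - α) < 10 * β := fun h => by
    have h' : (α : ℝ) ≤ -2 := by exact_mod_cast h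
    exact_mod_cast (show (27 * (-2 - α) : ℝ) < 10 * β by nlinarith)
  have hlarge' : -2 ≤ α → 14 * (-2 - α) < 5 * β := fun h => by
    have h' : (-2 : ℝ) ≤ α := by exact_mod_cast h
    exact_mod_cast (show (14 * (-2 - α) : ℝ) < 5 * β by nlinarith)
  simp only [Prod.mk.injEq]
  interval_cases α <;> omega

theorem stmt6 (ρ : ℝ) (hρ : IsPerronRootOf ρ (quartic (-2) 0)) :
    (∀ α β : ℤ, ∀ l : ℝ, IsPerronRootOf l (quartic α β) → l < ρ →
      (α, β) = (-1, -1) ∨ (α, β) = (-2, 1) ∨ (α, β) = (-1, -2) ∨ (α, β) = (-3, 3)) ∧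
    (∀ α β : ℤ,
      ((α, β) = (-1, -1) ∨ (α, β) = (-2, 1) ∨ (α, β) = (-1, -2) ∨ (α, β) = (-3, 3)) →
      ∃ l : ℝ, IsPerronRootOf l (quartic α β) ∧ l < ρ) := by
  have hρ1 : ρ ∈ Set.Ici 1 := Set.mem_Ici.2 hρ.1.le
  have hc := hρ.traceQuadratic_eq_zero
  have hc2 : 2 < ρ + ρ⁻¹ := two_lt_add_inv hρ.1
  refine ⟨fun α β l hl hlρ => ?_, fun α β h => ?_⟩
  · exact quartic_coeffs_of_trace_lt hl.traceQuadratic_eq_zero (two_lt_add_inv hl.1)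
      (strictMonoOn_add_inv (Set.mem_Ici.2 hl.1.le) hρ1 hlρ) hc hl.neg_sub_trace_mem_Ioc
  · simp only [traceQuadratic] at hc
    push_cast at hc
    have hc3 : ρ + ρ⁻¹ < 3 := by nlinarith
    obtain ⟨l, hl, hlc⟩ : ∃ l, IsPerronRootOf l (quartic α β) ∧ l + l⁻¹ < ρ + ρ⁻¹ := by
      rcases h with h | h | h | h <;> obtain ⟨rfl, rfl⟩ := Prod.mk.inj h <;>
        exact exists_isPerronRootOf_quartic (by norm_num [traceQuadratic])
          (by norm_num [traceQuadratic]) hc2 (by simp only [traceQuadratic]; push_cast; nlinarith)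
    exact ⟨l, hl, (strictMonoOn_add_inv.lt_iff_lt (Set.mem_Ici.2 hl.1.le) hρ1).1 hlc⟩
end

section
/- The polynomial x^7 - 2x^4 - 2x^3 + 1 has a real root λ with 1.465 < λ < 1.466, and this root satisfies λ > 1 and strictly dominates all other complex roots of the polynomial in absolute value. -/
/-!
The septic factors as `(z + 1)` times a palindromic sextic, and the sextic is
`z³ · c(z + z⁻¹)` with `c(w) = w³ - w² - 2w - 1`. The real root `λ ≈ 1.4656` gives the real
root `μ = λ + λ⁻¹ ≈ 2.148` of `c`; the other two roots `w` of `c` satisfy a real quadratic with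
negative discriminant, so `‖w‖² = μ² - μ - 2`. Since `μ > 2` this is less than
`μ² - 4 = (λ - λ⁻¹)²`, while `‖z‖ ≥ λ` would force `‖z + z⁻¹‖ ≥ λ - λ⁻¹`. The roots with
`z + z⁻¹ = μ` are `λ` and `λ⁻¹`, and the remaining root is `-1`.
-/

open Complex

section Palindromic

variable {K : Type*} [Field K]

theorem septic_eq_mul_cubic_add_inv {z : K} (hz : z ≠ 0) :
    z ^ 7 - 2 * z ^ 4 - 2 * z ^ 3 + 1 =
      (z + 1) * z ^ 3 * ((z + z⁻¹) ^ 3 - (z + z⁻¹) ^ 2 - 2 * (z + z⁻¹) - 1) := by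
  field_simp
  ring

theorem cubic_add_inv_eq_zero_of_septic_eq_zero {z : K}
    (hz : z ^ 7 - 2 * z ^ 4 - 2 * z ^ 3 + 1 = 0) (hz₁ : z ≠ -1) :
    (z + z⁻¹) ^ 3 - (z + z⁻¹) ^ 2 - 2 * (z + z⁻¹) - 1 = 0 := by
  have hz₀ : z ≠ 0 := by
    rintro rfl
    norm_num at hz
  rw [septic_eq_mul_cubic_add_inv hz₀] at hz
  have hz₁' : z + 1 ≠ 0 := fun h => hz₁ (eq_neg_of_add_eq_zero_left h)
  simpa [hz₁', hz₀] using hz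

theorem eq_or_eq_inv_of_add_inv_eq_add_inv {z a : K} (hz : z ≠ 0) (ha : a ≠ 0)
    (h : z + z⁻¹ = a + a⁻¹) : z = a ∨ z = a⁻¹ := by
  have hfac : (z - a) * (z - a⁻¹) = z * ((z + z⁻¹) - (a + a⁻¹)) := by
    field_simp
    ring
  rw [h, sub_self, mul_zero, mul_eq_zero, sub_eq_zero, sub_eq_zero] at hfac
  exact hfac

end Palindromic

theorem norm_lt_of_norm_add_inv_lt {𝕜 : Type*} [NormedDivisionRing 𝕜] {z : 𝕜} {r : ℝ}
    (hr : 0 < r) (h : ‖z + z⁻¹‖ < r - r⁻¹) : ‖z‖ < r := by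
  by_contra! hrz
  have hz : ‖z‖ - ‖z‖⁻¹ ≤ ‖z + z⁻¹‖ := by
    simpa [norm_inv] using norm_sub_norm_le z (-z⁻¹)
  have hmono : r - r⁻¹ ≤ ‖z‖ - ‖z‖⁻¹ := sub_le_sub hrz (inv_anti₀ hr hrz)
  linarith

theorem norm_lt_of_sq_norm_add_inv_eq {𝕜 : Type*} [NormedDivisionRing 𝕜] {z : 𝕜} {r : ℝ}
    (hr : 1 < r) (h : ‖z + z⁻¹‖ ^ 2 = (r + r⁻¹) ^ 2 - (r + r⁻¹) - 2) : ‖z‖ < r := by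
  have hr₀ : 0 < r := by linarith
  have hgap : 0 < r - r⁻¹ := sub_pos.mpr ((inv_lt_one_of_one_lt₀ hr).trans hr)
  have hsq : (r - r⁻¹) ^ 2 = (r + r⁻¹) ^ 2 - 4 := by
    field_simp
    ring
  refine norm_lt_of_norm_add_inv_lt hr₀ (lt_of_pow_lt_pow_left₀ 2 hgap.le ?_)
  rw [h, hsq]
  have : 2 < r + r⁻¹ := by
    nlinarith [mul_pos (inv_pos.mpr hr₀) (pow_pos (sub_pos.mpr hr) 2), mul_inv_cancel₀ hr₀.ne']
  linarith

theorem Complex.sq_norm_eq_of_quadratic_eq_zero {b c : ℝ} (hdisc : b ^ 2 < 4 * c) {w : ℂ}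
    (hw : w ^ 2 + b * w + c = 0) : ‖w‖ ^ 2 = c := by
  have hre := congrArg re hw
  have him := congrArg im hw
  simp only [sq, add_re, mul_re, ofReal_re, ofReal_im, add_im, mul_im, zero_re, zero_im,
    zero_mul, sub_zero, add_zero] at hre him
  have him₀ : w.im ≠ 0 := by
    intro h
    rw [h] at hre
    nlinarith [sq_nonneg (2 * w.re + b)]
  have hre' : 2 * w.re + b = 0 := by
    apply mul_left_cancel₀ him₀
    linear_combination him
  rw [Complex.sq_norm, normSq_apply]
  linear_combination -hre + w.re * hre'

theorem exists_septic_root_mem_Ioo :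
    ∃ lam ∈ Set.Ioo (1.465 : ℝ) 1.466, lam ^ 7 - 2 * lam ^ 4 - 2 * lam ^ 3 + 1 = 0 := by
  have hcont : ContinuousOn (fun x : ℝ => x ^ 7 - 2 * x ^ 4 - 2 * x ^ 3 + 1)
      (Set.Icc 1.465 1.466) := by fun_prop
  have hsign : (0 : ℝ) ∈ Set.Ioo ((1.465 : ℝ) ^ 7 - 2 * 1.465 ^ 4 - 2 * 1.465 ^ 3 + 1)
      ((1.466 : ℝ) ^ 7 - 2 * 1.466 ^ 4 - 2 * 1.466 ^ 3 + 1) := by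
    constructor <;> norm_num
  exact intermediate_value_Ioo (by norm_num) hcont hsign

theorem norm_lt_of_septic_eq_zero {lam : ℝ} (hlam : 1.465 < lam)
    (hroot : lam ^ 7 - 2 * lam ^ 4 - 2 * lam ^ 3 + 1 = 0) {z : ℂ}
    (hz : z ^ 7 - 2 * z ^ 4 - 2 * z ^ 3 + 1 = 0) (hne : z ≠ lam) : ‖z‖ < lam := by
  have hlam₀ : 0 < lam := by linarith
  have hlam₁ : 1 < lam := by linarith
  rcases eq_or_ne z (-1) with rfl | hz₁
  · simpa using hlam₁
  set μ : ℝ := lam + lam⁻¹ with hμ_def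
  have hμ : μ ^ 3 - μ ^ 2 - 2 * μ - 1 = 0 :=
    cubic_add_inv_eq_zero_of_septic_eq_zero hroot (by linarith)
  -- enough for the discriminant `(μ - 1)² - 4(μ² - μ - 2) = 9 + 2μ - 3μ²` to be negative
  have hμ_gt : 2.1 < μ := by
    have hmul : lam * μ = lam ^ 2 + 1 := by
      rw [hμ_def]
      field_simp
    nlinarith
  set w := z + z⁻¹
  have hw := cubic_add_inv_eq_zero_of_septic_eq_zero hz hz₁
  have hfac : (w - μ) * (w ^ 2 + (μ - 1 : ℝ) * w + (μ ^ 2 - μ - 2 : ℝ)) = 0 := by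
    have hμC : (μ : ℂ) ^ 3 - (μ : ℂ) ^ 2 - 2 * μ - 1 = 0 := by exact_mod_cast hμ
    push_cast
    linear_combination hw - hμC
  rcases mul_eq_zero.mp hfac with hw_eq | hquad
  · have hz₀ : z ≠ 0 := by rintro rfl; norm_num at hz
    have hlamC : (lam : ℂ) ≠ 0 := by exact_mod_cast hlam₀.ne'
    have hw_eq' : z + z⁻¹ = lam + (lam : ℂ)⁻¹ := by
      rw [← sub_eq_zero, hw_eq.symm, hμ_def]
      push_cast
      ring
    obtain h | rfl := eq_or_eq_inv_of_add_inv_eq_add_inv hz₀ hlamC hw_eq'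
    · exact absurd h hne
    · rw [norm_inv, norm_real, Real.norm_of_nonneg hlam₀.le]
      exact (inv_lt_one_of_one_lt₀ hlam₁).trans hlam₁
  · exact norm_lt_of_sq_norm_add_inv_eq hlam₁
      (sq_norm_eq_of_quadratic_eq_zero (by nlinarith) hquad)

theorem stmt13 :
    ∃ lam : ℝ, 1.465 < lam ∧ lam < 1.466 ∧ 1 < lam ∧
      lam ^ 7 - 2 * lam ^ 4 - 2 * lam ^ 3 + 1 = 0 ∧
      ∀ z : ℂ, z ^ 7 - 2 * z ^ 4 - 2 * z ^ 3 + 1 = 0 → z ≠ (lam : ℂ) →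
        ‖z‖ < lam := by
  obtain ⟨lam, ⟨hlo, hhi⟩, hroot⟩ := exists_septic_root_mem_Ioo
  exact ⟨lam, hlo, hhi, by linarith, hroot,
    fun _ hz hne => norm_lt_of_septic_eq_zero hlo hroot hz hne⟩
end

section
/- The largest real root of x^8 - 2x^5 - 2x^3 + 1 is strictly smaller than the largest real root of x^7 - 2x^4 - 2x^3 + 1, which in turn is strictly smaller than the largest real root of x^4 - x^3 - x^2 - x + 1, which is strictly smaller than the largest real root of x^4 - 2x^3 - 2x + 1, which is strictly smaller than the largest real root of x^2 - 3x + 1. -/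
/-!
Each inequality `a < b` between consecutive largest roots is witnessed by a rational `c`:
the first polynomial is positive on `[c, ∞)`, so all its roots lie below `c`, while the second
is nonpositive at `c` and nonnegative further right, so by the intermediate value theorem it has
a root at or above `c`.
-/

open Set

theorem lt_of_forall_lt_of_exists_le {α : Type*} [Preorder α] {S T : Set α} {a b c : α}
    (ha : a ∈ S) (hb : b ∈ upperBounds T) (hS : ∀ x ∈ S, x < c) (hT : ∃ x ∈ T, c ≤ x) :
    a < b := by
  obtain ⟨x, hxT, hcx⟩ := hT
  exact (hS a ha).trans_le (hcx.trans (hb hxT))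

theorem exists_zero_ge_of_nonpos_of_nonneg {f : ℝ → ℝ} (hf : Continuous f) {c M : ℝ}
    (hcM : c ≤ M) (hc : f c ≤ 0) (hM : 0 ≤ f M) : ∃ x ∈ {x | f x = 0}, c ≤ x := by
  obtain ⟨x, hx, hfx⟩ := intermediate_value_Icc hcM hf.continuousOn ⟨hc, hM⟩
  exact ⟨x, hfx, hx.1⟩

theorem IsGreatest.lt_of_zero_sets {f g : ℝ → ℝ} {a b : ℝ} (c M : ℝ)
    (ha : IsGreatest {x | f x = 0} a) (hb : IsGreatest {x | g x = 0} b)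
    (hf : ∀ x, c ≤ x → 0 < f x) (hg : Continuous g) (hcM : c ≤ M) (hgc : g c ≤ 0)
    (hgM : 0 ≤ g M) : a < b :=
  lt_of_forall_lt_of_exists_le ha.1 hb.2
    (fun x hx => not_le.mp fun hcx => (hf x hcx).ne' hx)
    (exists_zero_ge_of_nonpos_of_nonneg hg hcM hgc hgM)

/- In each of the following, the Taylor coefficients of the polynomial at the bound are all
positive, which is what `nlinarith` finds from the powers of `x - c`. -/

theorem braid8_poly_pos {x : ℝ} (hx : 36 / 25 ≤ x) : 0 < x ^ 8 - 2 * x ^ 5 - 2 * x ^ 3 + 1 := by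
  have ht : 0 ≤ x - 36 / 25 := by linarith
  nlinarith [pow_nonneg ht 2, pow_nonneg ht 3, pow_nonneg ht 4, pow_nonneg ht 5,
    pow_nonneg ht 6, pow_nonneg ht 7, pow_nonneg ht 8]

theorem braid7_poly_pos {x : ℝ} (hx : 8 / 5 ≤ x) : 0 < x ^ 7 - 2 * x ^ 4 - 2 * x ^ 3 + 1 := by
  have ht : 0 ≤ x - 8 / 5 := by linarith
  nlinarith [pow_nonneg ht 2, pow_nonneg ht 3, pow_nonneg ht 4, pow_nonneg ht 5,
    pow_nonneg ht 6, pow_nonneg ht 7]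

theorem braid5_poly_pos {x : ℝ} (hx : 2 ≤ x) : 0 < x ^ 4 - x ^ 3 - x ^ 2 - x + 1 := by
  have ht : 0 ≤ x - 2 := by linarith
  nlinarith [pow_nonneg ht 2, pow_nonneg ht 3, pow_nonneg ht 4]

theorem braid4_poly_pos {x : ℝ} (hx : 5 / 2 ≤ x) : 0 < x ^ 4 - 2 * x ^ 3 - 2 * x + 1 := by
  have ht : 0 ≤ x - 5 / 2 := by linarith
  nlinarith [pow_nonneg ht 2, pow_nonneg ht 3, pow_nonneg ht 4]

theorem stmt15 (l8 l7 l5 l4 l3 : ℝ)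
    (h8 : IsGreatest {x : ℝ | x ^ 8 - 2 * x ^ 5 - 2 * x ^ 3 + 1 = 0} l8)
    (h7 : IsGreatest {x : ℝ | x ^ 7 - 2 * x ^ 4 - 2 * x ^ 3 + 1 = 0} l7)
    (h5 : IsGreatest {x : ℝ | x ^ 4 - x ^ 3 - x ^ 2 - x + 1 = 0} l5)
    (h4 : IsGreatest {x : ℝ | x ^ 4 - 2 * x ^ 3 - 2 * x + 1 = 0} l4)
    (h3 : IsGreatest {x : ℝ | x ^ 2 - 3 * x + 1 = 0} l3) :
    l8 < l7 ∧ l7 < l5 ∧ l5 < l4 ∧ l4 < l3 :=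
  ⟨h8.lt_of_zero_sets (36 / 25) 2 h7 (fun _ => braid8_poly_pos) (by fun_prop)
      (by norm_num) (by norm_num) (by norm_num),
    h7.lt_of_zero_sets (8 / 5) 2 h5 (fun _ => braid7_poly_pos) (by fun_prop)
      (by norm_num) (by norm_num) (by norm_num),
    h5.lt_of_zero_sets 2 3 h4 (fun _ => braid5_poly_pos) (by fun_prop)
      (by norm_num) (by norm_num) (by norm_num),
    h4.lt_of_zero_sets (5 / 2) 3 h3 (fun _ => braid4_poly_pos) (by fun_prop)
      (by norm_num) (by norm_num) (by norm_num)⟩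
end
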